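/- Let σ : ℝ² → ℝ^(n+2) be C² with B(σ,σ) = 0, B(σ_x,σ_x) = 1 = B(σ_y,σ_y), and B(σ_x,σ_y) = 0 at every point. Then at every point the 4×4 Gram matrix M with entries M i k = B(a_i, a_k), where (a_1,a_2,a_3,a_4) = (σ, σ_x, σ_y, σ_xx+σ_yy), has determinant −4; in particular the four vectors σ, σ_x, σ_y, σ_xx+σ_yy are linearly independent, so the central sphere congruence S = span{σ, σ_x, σ_y, σ_xx+σ_yy} is a nondegenerate 4-dimensional subspace of ℝ^(n+2). -/

import Mathlib

/-- The Minkowski bilinear form of signature `(n+1, 1)` on `ℝ^(n+2)`. -/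
noncomputable def B (n : ℕ) (u v : Fin (n + 2) → ℝ) : ℝ :=
  (∑ i : Fin (n + 1), u i.castSucc * v i.castSucc) -
    u (Fin.last (n + 1)) * v (Fin.last (n + 1))

/-- The partial derivative of `σ : ℝ² → ℝ^(n+2)` in the direction `e`. -/
noncomputable def pd (n : ℕ) (σ : ℝ × ℝ → Fin (n + 2) → ℝ) (e : ℝ × ℝ)
    (p : ℝ × ℝ) : Fin (n + 2) → ℝ :=
  fderiv ℝ σ p e

/-! Differentiating the constraints determines every entry of the Gram matrix of
`(σ, σ_x, σ_y, Δσ)` except `B(Δσ, Δσ)`: `σ` is orthogonal to `σ_x, σ_y`; differentiating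
`B(σ_e, σ) = 0` once more gives `B(σ_ee, σ) = -B(σ_e, σ_e) = -1`; and, using the symmetry of
second derivatives, `B(σ_ee, σ_e) = B(σ_ff, σ_e) = 0`. The Gram matrix is therefore
`[[0,0,0,-2],[0,1,0,0],[0,0,1,0],[-2,0,0,*]]`, of determinant `-4` whatever `*` is, and a
nonsingular Gram matrix forces linear independence. -/

theorem LinearMap.linearIndependent_of_det_ne_zero {R M ι : Type*} [CommRing R] [IsDomain R]
    [AddCommGroup M] [Module R M] [Fintype ι] [DecidableEq ι] (b : M →ₗ[R] M →ₗ[R] R)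
    {v : ι → M} (h : (Matrix.of fun i j => b (v i) (v j)).det ≠ 0) : LinearIndependent R v :=
  LinearIndependent.of_comp (LinearMap.pi fun j => b.flip (v j))
    (Matrix.linearIndependent_rows_of_det_ne_zero h)

section Minkowski

variable {n : ℕ}

theorem B_comm (u v : Fin (n + 2) → ℝ) : B n u v = B n v u := by
  simp only [B, mul_comm]

theorem B_add_left (u w v : Fin (n + 2) → ℝ) : B n (u + w) v = B n u v + B n w v := by
  simp only [B, Pi.add_apply, add_mul, Finset.sum_add_distrib]
  ring

theorem B_smul_left (c : ℝ) (u v : Fin (n + 2) → ℝ) : B n (c • u) v = c * B n u v := by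
  simp only [B, Pi.smul_apply, smul_eq_mul, Finset.mul_sum, mul_sub, mul_assoc]

variable (n) in
noncomputable def minkowskiForm : (Fin (n + 2) → ℝ) →ₗ[ℝ] (Fin (n + 2) → ℝ) →ₗ[ℝ] ℝ :=
  LinearMap.mk₂ ℝ (B n) B_add_left B_smul_left
    (fun u v w => by rw [B_comm, B_add_left, B_comm v, B_comm w])
    (fun c u v => by rw [B_comm, B_smul_left, B_comm, smul_eq_mul])

theorem minkowskiForm_apply (u v : Fin (n + 2) → ℝ) : minkowskiForm n u v = B n u v := rfl

theorem B_pd_add_B_pd_eq_zero {u v : ℝ × ℝ → Fin (n + 2) → ℝ} (hu : Differentiable ℝ u)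
    (hv : Differentiable ℝ v) {c : ℝ} (hc : ∀ q, B n (u q) (v q) = c) (e p : ℝ × ℝ) :
    B n (pd n u e p) (v p) + B n (u p) (pd n v e p) = 0 := by
  have h := (minkowskiForm n).toContinuousBilinearMap.fderiv_of_bilinear (hu p) (hv p)
  simp only [LinearMap.toContinuousBilinearMap_apply, minkowskiForm_apply, hc] at h
  simpa [pd, minkowskiForm_apply, add_comm] using (congrArg (· e) h).symm

theorem B_pd_self_eq_zero {u : ℝ × ℝ → Fin (n + 2) → ℝ} (hu : Differentiable ℝ u) {c : ℝ}
    (hc : ∀ q, B n (u q) (u q) = c) (e p : ℝ × ℝ) : B n (pd n u e p) (u p) = 0 := by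
  have h := B_pd_add_B_pd_eq_zero hu hu hc e p
  rw [B_comm (u p)] at h
  linarith

end Minkowski

section SecondDerivatives

variable {n : ℕ} {σ : ℝ × ℝ → Fin (n + 2) → ℝ}

theorem differentiable_pd (hσ : ContDiff ℝ 2 σ) (e : ℝ × ℝ) : Differentiable ℝ (pd n σ e) :=
  ((hσ.fderiv_right le_rfl).clm_apply contDiff_const).differentiable one_ne_zero

theorem pd_pd_comm (hσ : ContDiff ℝ 2 σ) (e f p : ℝ × ℝ) :
    pd n (pd n σ e) f p = pd n (pd n σ f) e p := by
  have hd : Differentiable ℝ (fderiv ℝ σ) := (hσ.fderiv_right le_rfl).differentiable one_ne_zero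
  have hpd (e f : ℝ × ℝ) : pd n (pd n σ e) f p = fderiv ℝ (fderiv ℝ σ) p f e := by
    change fderiv ℝ (fun q => fderiv ℝ σ q e) p f = _
    simp [fderiv_clm_apply (hd p) (differentiableAt_const e)]
  rw [hpd, hpd]
  exact hσ.contDiffAt.isSymmSndFDerivAt (by simp) f e

end SecondDerivatives

section CentralSphereCongruence

variable {n : ℕ} {σ : ℝ × ℝ → Fin (n + 2) → ℝ}

theorem B_pd_pd_self_eq_neg (hσ : ContDiff ℝ 2 σ) {c : ℝ} (hc : ∀ q, B n (σ q) (σ q) = c)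
    (e p : ℝ × ℝ) : B n (pd n (pd n σ e) e p) (σ p) = -B n (pd n σ e p) (pd n σ e p) := by
  have hσd : Differentiable ℝ σ := hσ.differentiable (by norm_num)
  have h := B_pd_add_B_pd_eq_zero (differentiable_pd hσ e) hσd (B_pd_self_eq_zero hσd hc e) e p
  linarith

theorem B_pd_pd_eq_zero (hσ : ContDiff ℝ 2 σ) {e f : ℝ × ℝ} {c d : ℝ}
    (hf : ∀ q, B n (pd n σ f q) (pd n σ f q) = c) (hfe : ∀ q, B n (pd n σ f q) (pd n σ e q) = d)
    (p : ℝ × ℝ) : B n (pd n (pd n σ f) f p) (pd n σ e p) = 0 := by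
  have h := B_pd_add_B_pd_eq_zero (differentiable_pd hσ f) (differentiable_pd hσ e) hfe f p
  rw [pd_pd_comm hσ e f, B_comm (pd n σ f p)] at h
  linarith [B_pd_self_eq_zero (differentiable_pd hσ f) hf e p]

noncomputable def centralSphereFrame (n : ℕ) (σ : ℝ × ℝ → Fin (n + 2) → ℝ) (p : ℝ × ℝ) :
    Fin 4 → Fin (n + 2) → ℝ :=
  ![σ p, pd n σ (1, 0) p, pd n σ (0, 1) p,
    pd n (pd n σ (1, 0)) (1, 0) p + pd n (pd n σ (0, 1)) (0, 1) p]

theorem gram_centralSphereFrame (hσ : ContDiff ℝ 2 σ) (h0 : ∀ p, B n (σ p) (σ p) = 0)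
    (hx : ∀ p, B n (pd n σ (1, 0) p) (pd n σ (1, 0) p) = 1)
    (hy : ∀ p, B n (pd n σ (0, 1) p) (pd n σ (0, 1) p) = 1)
    (horth : ∀ p, B n (pd n σ (1, 0) p) (pd n σ (0, 1) p) = 0) (p : ℝ × ℝ) :
    (Matrix.of fun i k => B n (centralSphereFrame n σ p i) (centralSphereFrame n σ p k)) =
      !![0, 0, 0, -2; 0, 1, 0, 0; 0, 0, 1, 0;
        -2, 0, 0, B n (centralSphereFrame n σ p 3) (centralSphereFrame n σ p 3)] := by
  set Δ := pd n (pd n σ (1, 0)) (1, 0) p + pd n (pd n σ (0, 1)) (0, 1) p with hΔ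
  have hσd : Differentiable ℝ σ := hσ.differentiable (by norm_num)
  have hxσ : B n (pd n σ (1, 0) p) (σ p) = 0 := B_pd_self_eq_zero hσd h0 _ p
  have hyσ : B n (pd n σ (0, 1) p) (σ p) = 0 := B_pd_self_eq_zero hσd h0 _ p
  have hΔσ : B n Δ (σ p) = -2 := by
    rw [B_add_left, B_pd_pd_self_eq_neg hσ h0, B_pd_pd_self_eq_neg hσ h0, hx, hy]
    norm_num
  have hΔx : B n Δ (pd n σ (1, 0) p) = 0 := by
    rw [B_add_left, B_pd_self_eq_zero (differentiable_pd hσ _) hx,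
      B_pd_pd_eq_zero hσ hy fun q => (B_comm _ _).trans (horth q), add_zero]
  have hΔy : B n Δ (pd n σ (0, 1) p) = 0 := by
    rw [B_add_left, B_pd_self_eq_zero (differentiable_pd hσ _) hy, B_pd_pd_eq_zero hσ hx horth,
      zero_add]
  have swap {u v : Fin (n + 2) → ℝ} {r : ℝ} (h : B n u v = r) : B n v u = r := B_comm v u ▸ h
  ext i k
  fin_cases i <;> fin_cases k <;>
    simp [centralSphereFrame, ← hΔ, h0, hx, hy, horth, hxσ, hyσ, hΔσ, hΔx, hΔy, swap (horth p),
      swap hxσ, swap hyσ, swap hΔσ, swap hΔx, swap hΔy]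

theorem det_centralSphereGram (b : ℝ) :
    (!![0, 0, 0, -2; 0, 1, 0, 0; 0, 0, 1, 0; -2, 0, 0, b] : Matrix (Fin 4) (Fin 4) ℝ).det = -4 := by
  simp [Matrix.det_succ_row_zero, Fin.sum_univ_succ, Fin.succAbove]
  norm_num

end CentralSphereCongruence

/-- For a normalized null conformal map `σ`, the Gram matrix of
`(σ, σ_x, σ_y, σ_xx + σ_yy)` has determinant `-4`; in particular these four vectors are
linearly independent, so the central sphere congruence is a nondegenerate `4`-dimensional
subspace. -/
theorem statement9 (n : ℕ) (σ : ℝ × ℝ → Fin (n + 2) → ℝ)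
    (hσ : ContDiff ℝ 2 σ)
    (h0 : ∀ p, B n (σ p) (σ p) = 0)
    (hx : ∀ p, B n (pd n σ (1, 0) p) (pd n σ (1, 0) p) = 1)
    (hy : ∀ p, B n (pd n σ (0, 1) p) (pd n σ (0, 1) p) = 1)
    (horth : ∀ p, B n (pd n σ (1, 0) p) (pd n σ (0, 1) p) = 0) :
    ∀ p : ℝ × ℝ,
      (Matrix.of fun i k : Fin 4 =>
          B n
            (![σ p, pd n σ (1, 0) p, pd n σ (0, 1) p,
              pd n (pd n σ (1, 0)) (1, 0) p + pd n (pd n σ (0, 1)) (0, 1) p] i)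
            (![σ p, pd n σ (1, 0) p, pd n σ (0, 1) p,
              pd n (pd n σ (1, 0)) (1, 0) p + pd n (pd n σ (0, 1)) (0, 1) p] k)).det =
          -4 ∧
        LinearIndependent ℝ
          ![σ p, pd n σ (1, 0) p, pd n σ (0, 1) p,
            pd n (pd n σ (1, 0)) (1, 0) p + pd n (pd n σ (0, 1)) (0, 1) p] := by
  intro p
  have hdet : (Matrix.of fun i k =>
      B n (centralSphereFrame n σ p i) (centralSphereFrame n σ p k)).det = -4 := by
    rw [gram_centralSphereFrame hσ h0 hx hy horth p, det_centralSphereGram]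
  exact ⟨hdet, (minkowskiForm n).linearIndependent_of_det_ne_zero (hdet ▸ by norm_num)⟩
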